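/- arXiv:1907.11028 — 3 statements merged into one kernel-verified Lean document; each statement's English description precedes it below -/
import Mathlib

section
/- Assume there exist constants τ_i, ξ_{ij} ∈ (0,∞) such that: (i) 0 ≤ f_i(t, x₁₀,…,x₁m₁,…,x_{n0},…,x_{n m_n}) ≤ τ_i·x_{i0} for all (t, x₁₀,…,x_{n m_n}) ∈ [0,1] × ∏_{j=1}^n ([0,∞) × ℝ^{m_j}); (ii) h_{ij}[u] ≤ ξ_{ij}·‖u_i‖_∞ for every u ∈ P; and (iii) max over i=1,…,n of ( λ_i τ_i K_{i0} + Σ_{j=1}^{p_i} η_{ij} ξ_{ij} ‖γ_{ij}‖_∞ ) < 1. Then the only possible solution in P of the system u_i(t) = λ_i ∫₀¹ k_i(t,s) f_i(s, u₁(s),…,u₁^{(m₁)}(s),…,u_n(s),…,u_n^{(m_n)}(s)) ds + Σ_{j=1}^{p_i} η_{ij} γ_{ij}(t) h_{ij}[u], i = 1,…,n, is the zero function. -/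
open Set MeasureTheory

/-- The `Cᵐ[0,1]` norm `max_{0 ≤ j ≤ mi} ‖g⁽ʲ⁾‖_∞` (derivatives within `[0,1]`). -/
noncomputable def normCm (mi : ℕ) (g : ℝ → ℝ) : ℝ :=
  ⨆ j : Fin (mi + 1), ⨆ t : Set.Icc (0:ℝ) 1, |iteratedDerivWithin j.val g (Set.Icc 0 1) ↑t|

/-- The norm `‖u‖ = max_i ‖u_i‖_{C^{m_i}}` on `∏ᵢ C^{m_i}[0,1]`. -/
noncomputable def normP {n : ℕ} (m : Fin n → ℕ) (u : Fin n → ℝ → ℝ) : ℝ :=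
  ⨆ i, normCm (m i) (u i)

/-- Membership in the cone `P = {u ∈ ∏ᵢ C^{m_i}[0,1] : uᵢ ≥ 0 on [0,1]}`. -/
def memP {n : ℕ} (m : Fin n → ℕ) (u : Fin n → ℝ → ℝ) : Prop :=
  (∀ i, ContDiffOn ℝ (m i) (u i) (Set.Icc 0 1)) ∧
  (∀ i, ∀ t ∈ Set.Icc (0:ℝ) 1, 0 ≤ u i t)

/-- The vector `(u₁(s),…,u₁^{(m₁)}(s),…,u_n(s),…,u_n^{(m_n)}(s))` of values and
derivatives (within `[0,1]`), fed to the nonlinearities. -/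
noncomputable def jet {n : ℕ} (m : Fin n → ℕ) (u : Fin n → ℝ → ℝ) (s : ℝ) :
    (j : Fin n) → Fin (m j + 1) → ℝ :=
  fun j l => iteratedDerivWithin l.val (u j) (Set.Icc 0 1) s

/-- The box `∏ᵢ ([0,ρ] × [−ρ,ρ]^{m_i})`, i.e. the `x`-section of `I_ρ`. -/
def Jset {n : ℕ} (m : Fin n → ℕ) (ρ : ℝ) : Set ((j : Fin n) → Fin (m j + 1) → ℝ) :=
  {x | ∀ j, x j 0 ∈ Set.Icc (0:ℝ) ρ ∧ ∀ l : Fin (m j + 1), l ≠ 0 → x j l ∈ Set.Icc (-ρ) ρ}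

/-- The sup norm `‖g‖_∞` on `[0,1]`. -/
noncomputable def supIcc (g : ℝ → ℝ) : ℝ := ⨆ t : Set.Icc (0:ℝ) 1, |g ↑t|

/-!
Fix a component `i` and put `M := ‖u_i‖_∞`. The growth bounds give `f_i(s, …) ≤ τ_i M` and
`h_{ij}[u] ≤ ξ_{ij} M`, so by the equation `u_i(t) ≤ (λ_i τ_i K_{i0} + Σ_j η_{ij} ξ_{ij} ‖γ_{ij}‖_∞) M`
for every `t`. Taking the supremum, `M ≤ c M` with `c < 1`, hence `M = 0`.
-/

lemma abs_le_supIcc {g : ℝ → ℝ} (hg : ContinuousOn g (Icc 0 1)) {t : ℝ} (ht : t ∈ Icc (0:ℝ) 1) :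
    |g t| ≤ supIcc g := by
  have hbdd : BddAbove (range fun s : Icc (0:ℝ) 1 => |g s|) := by
    simpa only [image_eq_range] using (isCompact_Icc.image_of_continuousOn hg.abs).bddAbove
  exact le_ciSup hbdd ⟨t, ht⟩

lemma le_supIcc {g : ℝ → ℝ} (hg : ContinuousOn g (Icc 0 1)) {t : ℝ} (ht : t ∈ Icc (0:ℝ) 1) :
    g t ≤ supIcc g :=
  (le_abs_self _).trans (abs_le_supIcc hg ht)

lemma supIcc_nonneg {g : ℝ → ℝ} (hg : ContinuousOn g (Icc 0 1)) : 0 ≤ supIcc g :=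
  (abs_nonneg _).trans (abs_le_supIcc hg (left_mem_Icc.2 zero_le_one))

lemma eq_zero_of_le_mul_supIcc {g : ℝ → ℝ} {c : ℝ} (hg : ContinuousOn g (Icc 0 1))
    (hg0 : ∀ t ∈ Icc (0:ℝ) 1, 0 ≤ g t) (hc : c < 1)
    (hle : ∀ t ∈ Icc (0:ℝ) 1, g t ≤ c * supIcc g) : ∀ t ∈ Icc (0:ℝ) 1, g t = 0 := by
  have hM0 := supIcc_nonneg hg
  have hMc : supIcc g ≤ c * supIcc g :=
    ciSup_le fun s => (abs_of_nonneg (hg0 s s.2)).trans_le (hle s s.2)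
  have hM : supIcc g ≤ 0 := by nlinarith
  intro t ht
  exact le_antisymm ((le_supIcc hg ht).trans hM) (hg0 t ht)

lemma Finset.sum_mul_mul_le_sum_mul {ι : Type*} (S : Finset ι) {η γ h ξ G : ι → ℝ} {M : ℝ}
    (hη : ∀ j ∈ S, 0 ≤ η j) (hγ0 : ∀ j ∈ S, 0 ≤ γ j) (hγ : ∀ j ∈ S, γ j ≤ G j)
    (hh0 : ∀ j ∈ S, 0 ≤ h j) (hh : ∀ j ∈ S, h j ≤ ξ j * M) :
    ∑ j ∈ S, η j * γ j * h j ≤ (∑ j ∈ S, η j * ξ j * G j) * M := by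
  rw [Finset.sum_mul]
  refine Finset.sum_le_sum fun j hj => ?_
  calc η j * γ j * h j ≤ η j * G j * (ξ j * M) :=
        mul_le_mul (mul_le_mul_of_nonneg_left (hγ j hj) (hη j hj)) (hh j hj) (hh0 j hj)
          (mul_nonneg (hη j hj) ((hγ0 j hj).trans (hγ j hj)))
    _ = η j * ξ j * G j * M := by ring

section DominatedKernel

variable {k : ℝ → ℝ → ℝ} {Φ : ℝ → ℝ} {a b : ℝ}

lemma integrableOn_of_dominated (hk : Measurable (Function.uncurry k))
    (hΦ : IntegrableOn Φ (Icc a b)) {t : ℝ}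
    (hdom : ∀ᵐ s ∂(volume.restrict (Icc a b)), |k t s| ≤ Φ s) :
    IntegrableOn (k t) (Icc a b) :=
  hΦ.mono' (hk.comp measurable_prodMk_left).aestronglyMeasurable hdom

lemma bddAbove_image_integral_of_dominated (hab : a ≤ b) (hk : Measurable (Function.uncurry k))
    (hΦ : IntegrableOn Φ (Icc a b))
    (hdom : ∀ t ∈ Icc a b, ∀ᵐ s ∂(volume.restrict (Icc a b)), |k t s| ≤ Φ s) :
    BddAbove ((fun t => ∫ s in a..b, k t s) '' Icc a b) := by
  refine ⟨∫ s in a..b, Φ s, ?_⟩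
  rintro _ ⟨t, ht, rfl⟩
  have hII : ∀ {g : ℝ → ℝ}, IntegrableOn g (Icc a b) → IntervalIntegrable g volume a b :=
    fun hg => (uIcc_of_le hab ▸ hg).intervalIntegrable
  refine intervalIntegral.integral_mono_ae_restrict hab
    (hII (integrableOn_of_dominated hk hΦ (hdom t ht))) (hII hΦ) ?_
  filter_upwards [hdom t ht] with s hs
  exact (le_abs_self _).trans hs

lemma integral_mul_le_sSup_mul (hab : a ≤ b) (hk : Measurable (Function.uncurry k))
    (hΦ : IntegrableOn Φ (Icc a b))
    (hdom : ∀ t ∈ Icc a b, ∀ᵐ s ∂(volume.restrict (Icc a b)), |k t s| ≤ Φ s)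
    {F : ℝ → ℝ} {B t : ℝ} (ht : t ∈ Icc a b) (hk0 : ∀ s ∈ Icc a b, 0 ≤ k t s)
    (hF0 : ∀ s ∈ Icc a b, 0 ≤ F s) (hFB : ∀ s ∈ Icc a b, F s ≤ B) :
    ∫ s in a..b, k t s * F s ≤ sSup ((fun t => ∫ s in a..b, k t s) '' Icc a b) * B := by
  have hB : 0 ≤ B := (hF0 a (left_mem_Icc.2 hab)).trans (hFB a (left_mem_Icc.2 hab))
  have hkt : IntegrableOn (k t) (Ioc a b) :=
    (integrableOn_of_dominated hk hΦ (hdom t ht)).mono_set Ioc_subset_Icc_self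
  have hmono : ∫ s in a..b, k t s * F s ≤ (∫ s in a..b, k t s) * B := by
    rw [intervalIntegral.integral_of_le hab, intervalIntegral.integral_of_le hab,
      ← integral_mul_const]
    refine integral_mono_of_nonneg ?_ (hkt.mul_const B) ?_
    · filter_upwards [ae_restrict_mem measurableSet_Ioc] with s hs
      exact mul_nonneg (hk0 s (Ioc_subset_Icc_self hs)) (hF0 s (Ioc_subset_Icc_self hs))
    · filter_upwards [ae_restrict_mem measurableSet_Ioc] with s hs
      exact mul_le_mul_of_nonneg_left (hFB s (Ioc_subset_Icc_self hs))
        (hk0 s (Ioc_subset_Icc_self hs))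
  exact hmono.trans (mul_le_mul_of_nonneg_right
    (le_csSup (bddAbove_image_integral_of_dominated hab hk hΦ hdom) (mem_image_of_mem _ ht)) hB)

end DominatedKernel

lemma jet_zero {n : ℕ} (m : Fin n → ℕ) (u : Fin n → ℝ → ℝ) (s : ℝ) (j : Fin n) :
    jet m u s j 0 = u j s := by
  simp [jet]

theorem stmt_1_general
    (n : ℕ) (m p : Fin n → ℕ)
    -- `dk i l t s` denotes `∂ˡk_i/∂tˡ(t,s)`; in particular `dk i 0` is the kernel `k_i`
    (dk : (i : Fin n) → ℕ → ℝ → ℝ → ℝ)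
    -- (C₁): `k_i ≥ 0`, measurable, continuous in `t` for a.e. `s`, dominated by `Φ_{i0} ∈ L¹`
    -- (C₂)-(C₃): similarly for the derivatives, the `m_i`-th one off the diagonal only
    (hk_nonneg : ∀ i, ∀ t ∈ Set.Icc (0:ℝ) 1, ∀ s ∈ Set.Icc (0:ℝ) 1, 0 ≤ dk i 0 t s)
    (hk_meas : ∀ i, ∀ l ≤ m i, Measurable (Function.uncurry (dk i l)))
    (Φ : (i : Fin n) → ℕ → ℝ → ℝ)
    (hΦ_int : ∀ i, ∀ l ≤ m i, IntegrableOn (Φ i l) (Set.Icc (0:ℝ) 1))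
    (hΦ_dom : ∀ i, ∀ l ≤ m i, ∀ t ∈ Set.Icc (0:ℝ) 1,
      ∀ᵐ s ∂(volume.restrict (Set.Icc (0:ℝ) 1)), |dk i l t s| ≤ Φ i l s)
    -- (C₄): the nonlinearities `f_i` are continuous and nonnegative
    (f : (i : Fin n) → ℝ → ((j : Fin n) → Fin (m j + 1) → ℝ) → ℝ)
    (hf_nonneg : ∀ i, ∀ t ∈ Set.Icc (0:ℝ) 1,
      ∀ x : (j : Fin n) → Fin (m j + 1) → ℝ, (∀ j, 0 ≤ x j 0) → 0 ≤ f i t x)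
    -- (C₅): `γ_{ij} ∈ C^{m_i}[0,1]` nonnegative; (C₆): nonnegative parameters
    (γ : (i : Fin n) → Fin (p i) → ℝ → ℝ)
    (hγ_smooth : ∀ i j, ContDiffOn ℝ (m i) (γ i j) (Set.Icc 0 1))
    (hγ_nonneg : ∀ i j, ∀ t ∈ Set.Icc (0:ℝ) 1, 0 ≤ γ i j t)
    (lam : Fin n → ℝ) (η : (i : Fin n) → Fin (p i) → ℝ)
    (hlam : ∀ i, 0 ≤ lam i) (hη : ∀ i j, 0 ≤ η i j)
    -- (C₈): the functionals `h_{ij} : P → [0,∞)` are continuous and map bounded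
    -- sets into bounded sets
    (h : (i : Fin n) → Fin (p i) → (Fin n → ℝ → ℝ) → ℝ)
    (hh_nonneg : ∀ i j, ∀ u, memP m u → 0 ≤ h i j u)
    (τ : Fin n → ℝ) (ξ : (i : Fin n) → Fin (p i) → ℝ)
    (hτ : ∀ i, 0 < τ i)
    (hf_growth : ∀ i, ∀ t ∈ Set.Icc (0:ℝ) 1,
      ∀ x : (j : Fin n) → Fin (m j + 1) → ℝ, (∀ j, 0 ≤ x j 0) →
        f i t x ≤ τ i * x i 0)
    (hh_growth : ∀ i j, ∀ u, memP m u → h i j u ≤ ξ i j * supIcc (u i))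
    (hlt : ∀ i, lam i * τ i *
        (sSup ((fun t : ℝ => ∫ s in (0:ℝ)..1, dk i 0 t s) '' Set.Icc (0:ℝ) 1)) +
      ∑ j, η i j * ξ i j * supIcc (γ i j) < 1) :
    ∀ u : Fin n → ℝ → ℝ, memP m u →
      (∀ i, ∀ t ∈ Set.Icc (0:ℝ) 1,
        u i t = lam i * (∫ s in (0:ℝ)..1, dk i 0 t s * f i s (jet m u s)) + ∑ j, η i j * γ i j t * h i j u) →
      ∀ i, ∀ t ∈ Set.Icc (0:ℝ) 1, u i t = 0 := by
  intro u hu hsol i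
  have hu_cont : ∀ j, ContinuousOn (u j) (Icc 0 1) := fun j => (hu.1 j).continuousOn
  have hjet_nonneg : ∀ s ∈ Icc (0:ℝ) 1, ∀ j, 0 ≤ jet m u s j 0 := fun s hs j => by
    rw [jet_zero]; exact hu.2 j s hs
  refine eq_zero_of_le_mul_supIcc (hu_cont i) (hu.2 i) (hlt i) fun t ht => ?_
  have hf_le : ∀ s ∈ Icc (0:ℝ) 1, f i s (jet m u s) ≤ τ i * supIcc (u i) := fun s hs => by
    refine (hf_growth i s hs _ (hjet_nonneg s hs)).trans ?_
    rw [jet_zero]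
    exact mul_le_mul_of_nonneg_left (le_supIcc (hu_cont i) hs) (hτ i).le
  have hintegral := integral_mul_le_sSup_mul zero_le_one (hk_meas i 0 (Nat.zero_le _))
    (hΦ_int i 0 (Nat.zero_le _)) (hΦ_dom i 0 (Nat.zero_le _)) ht (hk_nonneg i t ht)
    (fun s hs => hf_nonneg i s hs _ (hjet_nonneg s hs)) hf_le
  have hperturbation := Finset.univ.sum_mul_mul_le_sum_mul (fun j _ => hη i j)
    (fun j _ => hγ_nonneg i j t ht) (fun j _ => le_supIcc (hγ_smooth i j).continuousOn ht)
    (fun j _ => hh_nonneg i j u hu) (fun j _ => hh_growth i j u hu)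
  rw [hsol i t ht]
  calc _ ≤ lam i * (_ * (τ i * supIcc (u i))) + _ :=
        add_le_add (mul_le_mul_of_nonneg_left hintegral (hlam i)) hperturbation
    _ = _ := by ring

/-- Theorem 2.4 of the paper, non-existence: if
`0 ≤ f_i ≤ τ_i x_{i0}`, `h_{ij}[u] ≤ ξ_{ij} ‖u_i‖_∞` and
`max_i (λ_i τ_i K_{i0} + Σ_j η_{ij} ξ_{ij} ‖γ_{ij}‖_∞) < 1`, then the system of
perturbed Hammerstein integral equations has at most the zero solution in `P`. -/
theorem stmt_1
    (n : ℕ) (hn : 0 < n) (m p : Fin n → ℕ)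
    (hm : ∀ i, 1 ≤ m i) (hp : ∀ i, 1 ≤ p i)
    -- `dk i l t s` denotes `∂ˡk_i/∂tˡ(t,s)`; in particular `dk i 0` is the kernel `k_i`
    (dk : (i : Fin n) → ℕ → ℝ → ℝ → ℝ)
    -- (C₁): `k_i ≥ 0`, measurable, continuous in `t` for a.e. `s`, dominated by `Φ_{i0} ∈ L¹`
    -- (C₂)-(C₃): similarly for the derivatives, the `m_i`-th one off the diagonal only
    (hk_nonneg : ∀ i, ∀ t ∈ Set.Icc (0:ℝ) 1, ∀ s ∈ Set.Icc (0:ℝ) 1, 0 ≤ dk i 0 t s)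
    (hk_meas : ∀ i, ∀ l ≤ m i, Measurable (Function.uncurry (dk i l)))
    (hk_cont : ∀ i, ∀ l < m i, ∀ᵐ s ∂(volume.restrict (Set.Icc (0:ℝ) 1)),
      ContinuousOn (fun t => dk i l t s) (Set.Icc (0:ℝ) 1))
    (hk_cont_top : ∀ i, ∀ᵐ s ∂(volume.restrict (Set.Icc (0:ℝ) 1)),
      ContinuousOn (fun t => dk i (m i) t s) (Set.Icc (0:ℝ) 1 \ {s}))
    (Φ : (i : Fin n) → ℕ → ℝ → ℝ)
    (hΦ_int : ∀ i, ∀ l ≤ m i, IntegrableOn (Φ i l) (Set.Icc (0:ℝ) 1))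
    (hΦ_dom : ∀ i, ∀ l ≤ m i, ∀ t ∈ Set.Icc (0:ℝ) 1,
      ∀ᵐ s ∂(volume.restrict (Set.Icc (0:ℝ) 1)), |dk i l t s| ≤ Φ i l s)
    (hk_deriv : ∀ i, ∀ l, l + 1 < m i → ∀ s ∈ Set.Icc (0:ℝ) 1, ∀ t ∈ Set.Icc (0:ℝ) 1,
      HasDerivWithinAt (fun τ => dk i l τ s) (dk i (l + 1) t s) (Set.Icc (0:ℝ) 1) t)
    (hk_deriv_top : ∀ i, ∀ s ∈ Set.Icc (0:ℝ) 1, ∀ t ∈ Set.Icc (0:ℝ) 1, t ≠ s →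
      HasDerivWithinAt (fun τ => dk i (m i - 1) τ s) (dk i (m i) t s) (Set.Icc (0:ℝ) 1) t)
    -- (C₄): the nonlinearities `f_i` are continuous and nonnegative
    (f : (i : Fin n) → ℝ → ((j : Fin n) → Fin (m j + 1) → ℝ) → ℝ)
    (hf_cont : ∀ i, ContinuousOn
      (fun q : ℝ × ((j : Fin n) → Fin (m j + 1) → ℝ) => f i q.1 q.2)
      (Set.Icc (0:ℝ) 1 ×ˢ {x : (j : Fin n) → Fin (m j + 1) → ℝ | ∀ j, 0 ≤ x j 0}))
    (hf_nonneg : ∀ i, ∀ t ∈ Set.Icc (0:ℝ) 1,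
      ∀ x : (j : Fin n) → Fin (m j + 1) → ℝ, (∀ j, 0 ≤ x j 0) → 0 ≤ f i t x)
    -- (C₅): `γ_{ij} ∈ C^{m_i}[0,1]` nonnegative; (C₆): nonnegative parameters
    (γ : (i : Fin n) → Fin (p i) → ℝ → ℝ)
    (hγ_smooth : ∀ i j, ContDiffOn ℝ (m i) (γ i j) (Set.Icc 0 1))
    (hγ_nonneg : ∀ i j, ∀ t ∈ Set.Icc (0:ℝ) 1, 0 ≤ γ i j t)
    (lam : Fin n → ℝ) (η : (i : Fin n) → Fin (p i) → ℝ)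
    (hlam : ∀ i, 0 ≤ lam i) (hη : ∀ i j, 0 ≤ η i j)
    -- (C₈): the functionals `h_{ij} : P → [0,∞)` are continuous and map bounded
    -- sets into bounded sets
    (h : (i : Fin n) → Fin (p i) → (Fin n → ℝ → ℝ) → ℝ)
    (hh_nonneg : ∀ i j, ∀ u, memP m u → 0 ≤ h i j u)
    (hh_cont : ∀ i j, ∀ u, memP m u → ∀ ε > (0:ℝ), ∃ δ' > (0:ℝ), ∀ v, memP m v →
      normP m (fun i' t => u i' t - v i' t) < δ' → |h i j u - h i j v| < ε)
    (hh_bdd : ∀ i j, ∀ B : ℝ, ∃ C : ℝ, ∀ u, memP m u → normP m u ≤ B → h i j u ≤ C)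
    (τ : Fin n → ℝ) (ξ : (i : Fin n) → Fin (p i) → ℝ)
    (hτ : ∀ i, 0 < τ i) (hξ : ∀ i j, 0 < ξ i j)
    (hf_growth : ∀ i, ∀ t ∈ Set.Icc (0:ℝ) 1,
      ∀ x : (j : Fin n) → Fin (m j + 1) → ℝ, (∀ j, 0 ≤ x j 0) →
        f i t x ≤ τ i * x i 0)
    (hh_growth : ∀ i j, ∀ u, memP m u → h i j u ≤ ξ i j * supIcc (u i))
    (hlt : ∀ i, lam i * τ i *
        (sSup ((fun t : ℝ => ∫ s in (0:ℝ)..1, dk i 0 t s) '' Set.Icc (0:ℝ) 1)) +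
      ∑ j, η i j * ξ i j * supIcc (γ i j) < 1) :
    ∀ u : Fin n → ℝ → ℝ, memP m u →
      (∀ i, ∀ t ∈ Set.Icc (0:ℝ) 1,
        u i t = lam i * (∫ s in (0:ℝ)..1, dk i 0 t s * f i s (jet m u s)) + ∑ j, η i j * γ i j t * h i j u) →
      ∀ i, ∀ t ∈ Set.Icc (0:ℝ) 1, u i t = 0 :=
  stmt_1_general n m p dk hk_nonneg hk_meas Φ hΦ_int hΦ_dom f hf_nonneg γ hγ_smooth hγ_nonneg lam η
    hlam hη h hh_nonneg τ ξ hτ hf_growth hh_growth hlt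
end

section
/- Assume there exist r, δ > 0 and an index i₀ ∈ {1,…,n} such that λ_{i₀} ≥ μ_{i₀}/δ and f_{i₀}(t, x₁₀,…,x₁m₁,…,x_{n0},…,x_{n m_n}) ≥ δ·x_{i₀0} for all (t, x₁₀,…,x_{n m_n}) ∈ I_r. Let φ_{i₀} ∈ C[0,1] be a nonnegative, not identically zero eigenfunction of L_{i₀} with φ_{i₀} = μ_{i₀} L_{i₀} φ_{i₀}, and let φ := (φ₁,…,φ_n) ∈ P \ {0} be built from such eigenfunctions. Then u ≠ T u + σ·φ for every u ∈ P with ‖u‖ = r and every σ > 0. -/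
open Set MeasureTheory

/-! Suppose `u = T u + σ φ`. Every term of `T u` is nonnegative, and whenever
`u_{i₀} ≥ c φ_{i₀}` with `c ≥ 0`, the growth condition at `i₀` (which applies because `‖u‖ = r`
puts the jet of `u` in `I_r`) and the eigen-equation give
`λ_{i₀} L_{i₀} f_{i₀}(·, u) ≥ λ_{i₀} δ c r(L_{i₀}) φ_{i₀} ≥ c φ_{i₀}`, hence `u_{i₀} ≥ (c + σ) φ_{i₀}`.
Starting from `c = 0`, `u_{i₀} ≥ k σ φ_{i₀}` for every `k ∈ ℕ`, which is absurd where `φ_{i₀} > 0`. -/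

lemma nonpos_of_forall_mul_le_imp_add_mul_le {X : Type*} {K : Set X} {φ u : X → ℝ} {σ : ℝ}
    (hσ : 0 < σ) (hu : ∀ t ∈ K, 0 ≤ u t)
    (hstep : ∀ c, 0 ≤ c → (∀ t ∈ K, c * φ t ≤ u t) → ∀ t ∈ K, (c + σ) * φ t ≤ u t) :
    ∀ t ∈ K, φ t ≤ 0 := by
  have hmul : ∀ k : ℕ, ∀ t ∈ K, (k * σ) * φ t ≤ u t := by
    intro k
    induction k with
    | zero => simpa using hu
    | succ k ih =>
      simpa only [Nat.cast_succ, add_mul, one_mul] using hstep _ (by positivity) ih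
  intro t ht
  by_contra! hφ
  obtain ⟨k, hk⟩ := exists_nat_gt (u t / (σ * φ t))
  have := hmul k t ht
  rw [div_lt_iff₀ (mul_pos hσ hφ)] at hk
  linarith

lemma intervalIntegrable_mul_of_abs_le {a b : ℝ} (hab : a ≤ b) {k Φ g : ℝ → ℝ}
    (hk : Measurable k) (hΦ : IntegrableOn Φ (Icc a b))
    (hkΦ : ∀ᵐ s ∂volume.restrict (Icc a b), |k s| ≤ Φ s) (hg : ContinuousOn g (Icc a b)) :
    IntervalIntegrable (fun s => k s * g s) volume a b := by
  have hk_int : IntegrableOn k (Icc a b) :=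
    hΦ.mono' hk.aestronglyMeasurable (by simpa only [Real.norm_eq_abs] using hkΦ)
  exact (intervalIntegrable_iff_integrableOn_Icc_of_le hab).2
    (hk_int.mul_continuousOn hg isCompact_Icc)

lemma abs_iteratedDerivWithin_le_normCm {mi l : ℕ} {g : ℝ → ℝ}
    (hg : ContDiffOn ℝ mi g (Icc 0 1)) (hl : l ≤ mi) {s : ℝ} (hs : s ∈ Icc (0:ℝ) 1) :
    |iteratedDerivWithin l g (Icc 0 1) s| ≤ normCm mi g := by
  have hcont : ContinuousOn (iteratedDerivWithin l g (Icc 0 1)) (Icc 0 1) :=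
    hg.continuousOn_iteratedDerivWithin (by exact_mod_cast hl) (uniqueDiffOn_Icc one_pos)
  have hbdd : BddAbove (range fun t : Icc (0:ℝ) 1 => |iteratedDerivWithin l g (Icc 0 1) t|) :=
    (isCompact_range hcont.abs.domRestrict).bddAbove
  calc |iteratedDerivWithin l g (Icc 0 1) s|
      ≤ ⨆ t : Icc (0:ℝ) 1, |iteratedDerivWithin l g (Icc 0 1) t| := le_ciSup hbdd ⟨s, hs⟩
    _ ≤ normCm mi g :=
      le_ciSup (f := fun j : Fin (mi + 1) => ⨆ t : Icc (0:ℝ) 1,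
        |iteratedDerivWithin j.val g (Icc 0 1) t|) (finite_range _).bddAbove ⟨l, by omega⟩

lemma normCm_le_normP {n : ℕ} (m : Fin n → ℕ) (u : Fin n → ℝ → ℝ) (i : Fin n) :
    normCm (m i) (u i) ≤ normP m u :=
  le_ciSup (f := fun i => normCm (m i) (u i)) (finite_range _).bddAbove i

section Jet

variable {n : ℕ} {m : Fin n → ℕ} {u : Fin n → ℝ → ℝ}

lemma jet_apply_zero (s : ℝ) (j : Fin n) : jet m u s j 0 = u j s := by
  simp [jet]

lemma jet_mem_Jset (hu : memP m u) {s : ℝ} (hs : s ∈ Icc (0:ℝ) 1) :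
    jet m u s ∈ Jset m (normP m u) := by
  have hbound : ∀ j (l : Fin (m j + 1)), |jet m u s j l| ≤ normP m u := fun j l =>
    (abs_iteratedDerivWithin_le_normCm (hu.1 j) (Nat.lt_succ_iff.1 l.isLt) hs).trans
      (normCm_le_normP m u j)
  refine fun j => ⟨⟨?_, ?_⟩, fun l _ => abs_le.1 (hbound j l)⟩
  · rw [jet_apply_zero]
    exact hu.2 j s hs
  · exact (le_abs_self _).trans (hbound j 0)

lemma continuousOn_jet (hu : memP m u) : ContinuousOn (jet m u) (Icc 0 1) :=
  continuousOn_pi.2 fun j => continuousOn_pi.2 fun l =>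
    (hu.1 j).continuousOn_iteratedDerivWithin (by exact_mod_cast Nat.lt_succ_iff.1 l.isLt)
      (uniqueDiffOn_Icc one_pos)

lemma ContinuousOn.comp_jet {F : ℝ → ((j : Fin n) → Fin (m j + 1) → ℝ) → ℝ}
    (hF : ContinuousOn (fun q : ℝ × ((j : Fin n) → Fin (m j + 1) → ℝ) => F q.1 q.2)
      (Icc (0:ℝ) 1 ×ˢ {x | ∀ j, 0 ≤ x j 0}))
    (hu : memP m u) : ContinuousOn (fun s => F s (jet m u s)) (Icc 0 1) :=
  hF.comp (continuousOn_id.prodMk (continuousOn_jet hu)) fun s hs =>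
    ⟨hs, fun j => show 0 ≤ jet m u s j 0 from (jet_apply_zero s j).symm ▸ hu.2 j s hs⟩

end Jet

theorem stmt_3_general
    (n : ℕ) (m p : Fin n → ℕ)
    -- `dk i l t s` denotes `∂ˡk_i/∂tˡ(t,s)`; in particular `dk i 0` is the kernel `k_i`
    (dk : (i : Fin n) → ℕ → ℝ → ℝ → ℝ)
    -- (C₁): `k_i ≥ 0`, measurable, continuous in `t` for a.e. `s`, dominated by `Φ_{i0} ∈ L¹`
    (hk_nonneg : ∀ i, ∀ t ∈ Set.Icc (0:ℝ) 1, ∀ s ∈ Set.Icc (0:ℝ) 1, 0 ≤ dk i 0 t s)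
    (hk_meas : ∀ i, ∀ l ≤ m i, Measurable (Function.uncurry (dk i l)))
    (Φ : (i : Fin n) → ℕ → ℝ → ℝ)
    (hΦ_int : ∀ i, ∀ l ≤ m i, IntegrableOn (Φ i l) (Set.Icc (0:ℝ) 1))
    (hΦ_dom : ∀ i, ∀ l ≤ m i, ∀ t ∈ Set.Icc (0:ℝ) 1,
      ∀ᵐ s ∂(volume.restrict (Set.Icc (0:ℝ) 1)), |dk i l t s| ≤ Φ i l s)
    -- (C₄): the nonlinearities `f_i` are continuous and nonnegative
    (f : (i : Fin n) → ℝ → ((j : Fin n) → Fin (m j + 1) → ℝ) → ℝ)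
    (hf_cont : ∀ i, ContinuousOn
      (fun q : ℝ × ((j : Fin n) → Fin (m j + 1) → ℝ) => f i q.1 q.2)
      (Set.Icc (0:ℝ) 1 ×ˢ {x : (j : Fin n) → Fin (m j + 1) → ℝ | ∀ j, 0 ≤ x j 0}))
    -- (C₅): `γ_{ij} ∈ C^{m_i}[0,1]` nonnegative; (C₆): nonnegative parameters
    (γ : (i : Fin n) → Fin (p i) → ℝ → ℝ)
    (hγ_nonneg : ∀ i j, ∀ t ∈ Set.Icc (0:ℝ) 1, 0 ≤ γ i j t)
    (lam : Fin n → ℝ) (η : (i : Fin n) → Fin (p i) → ℝ)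
    (hlam : ∀ i, 0 ≤ lam i) (hη : ∀ i j, 0 ≤ η i j)
    -- (C₈): the functionals `h_{ij} : P → [0,∞)` are continuous and map bounded
    -- sets into bounded sets
    (h : (i : Fin n) → Fin (p i) → (Fin n → ℝ → ℝ) → ℝ)
    (hh_nonneg : ∀ i j, ∀ u, memP m u → 0 ≤ h i j u)
    (rL : Fin n → ℝ) (hrL_pos : ∀ i, 0 < rL i)
    (r δ : ℝ) (hδ : 0 < δ) (i₀ : Fin n)
    (hidx0a : (rL i₀)⁻¹ / δ ≤ lam i₀)
    (hidx0b : ∀ t ∈ Set.Icc (0:ℝ) 1, ∀ x ∈ Jset m r, δ * x i₀ 0 ≤ f i₀ t x)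
    (φ : Fin n → ℝ → ℝ)
    (hφ_cont : ∀ i, ContinuousOn (φ i) (Set.Icc 0 1))
    (hφ_nonneg : ∀ i, ∀ t ∈ Set.Icc (0:ℝ) 1, 0 ≤ φ i t)
    (hφ_ne : ∀ i, ∃ t ∈ Set.Icc (0:ℝ) 1, φ i t ≠ 0)
    (hφ_eig : ∀ i, ∀ t ∈ Set.Icc (0:ℝ) 1,
      φ i t = (rL i)⁻¹ * ∫ s in (0:ℝ)..1, dk i 0 t s * φ i s) :
    ∀ u : Fin n → ℝ → ℝ, memP m u → normP m u = r → ∀ σ : ℝ, 0 < σ →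
      ¬ (∀ i, ∀ t ∈ Set.Icc (0:ℝ) 1,
        u i t = (lam i * (∫ s in (0:ℝ)..1, dk i 0 t s * f i s (jet m u s)) + ∑ j, η i j * γ i j t * h i j u) + σ * φ i t) := by
  intro u hu hnorm σ hσ hfix
  obtain ⟨t₀, ht₀, hφt₀⟩ := hφ_ne i₀
  refine hφt₀ (le_antisymm ?_ (hφ_nonneg i₀ t₀ ht₀))
  refine nonpos_of_forall_mul_le_imp_add_mul_le hσ (hu.2 i₀) (fun c hc hcu t ht => ?_) t₀ ht₀
  have hk_int : ∀ g, ContinuousOn g (Icc 0 1) →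
      IntervalIntegrable (fun s => dk i₀ 0 t s * g s) volume 0 1 := fun g hg =>
    intervalIntegrable_mul_of_abs_le zero_le_one
      ((hk_meas i₀ 0 (Nat.zero_le _)).comp measurable_prodMk_left)
      (hΦ_int i₀ 0 (Nat.zero_le _)) (hΦ_dom i₀ 0 (Nat.zero_le _) t ht) hg
  have hf_ge : ∀ s ∈ Icc (0:ℝ) 1, δ * c * φ i₀ s ≤ f i₀ s (jet m u s) := fun s hs =>
    calc δ * c * φ i₀ s ≤ δ * u i₀ s := by
          rw [mul_assoc]; exact mul_le_mul_of_nonneg_left (hcu s hs) hδ.le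
      _ ≤ f i₀ s (jet m u s) := by
          have := hidx0b s hs _ (hnorm ▸ jet_mem_Jset hu hs)
          rwa [jet_apply_zero] at this
  have heig : rL i₀ * φ i₀ t = ∫ s in (0:ℝ)..1, dk i₀ 0 t s * φ i₀ s := by
    rw [hφ_eig i₀ t ht, mul_inv_cancel_left₀ (hrL_pos i₀).ne']
  have hLf : δ * c * (rL i₀ * φ i₀ t) ≤ ∫ s in (0:ℝ)..1, dk i₀ 0 t s * f i₀ s (jet m u s) :=
    calc δ * c * (rL i₀ * φ i₀ t) = ∫ s in (0:ℝ)..1, dk i₀ 0 t s * (δ * c * φ i₀ s) := by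
          rw [heig, ← intervalIntegral.integral_const_mul]
          congr 1 with s
          ring
      _ ≤ _ := intervalIntegral.integral_mono_on zero_le_one
          (hk_int _ ((hφ_cont i₀).const_smul (δ * c))) (hk_int _ ((hf_cont i₀).comp_jet hu))
          fun s hs => mul_le_mul_of_nonneg_left (hf_ge s hs) (hk_nonneg i₀ t ht s hs)
  have hlam_ge : 1 ≤ lam i₀ * δ * rL i₀ := by
    rwa [div_le_iff₀ hδ, inv_le_iff_one_le_mul₀ (hrL_pos i₀)] at hidx0a
  have hsum : 0 ≤ ∑ j, η i₀ j * γ i₀ j t * h i₀ j u := Finset.sum_nonneg fun j _ =>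
    mul_nonneg (mul_nonneg (hη i₀ j) (hγ_nonneg i₀ j t ht)) (hh_nonneg i₀ j u hu)
  rw [hfix i₀ t ht]
  nlinarith [mul_le_mul_of_nonneg_left hLf (hlam i₀),
    mul_nonneg (sub_nonneg.2 hlam_ge) (mul_nonneg hc (hφ_nonneg i₀ t ht))]

/-- under the eigenvalue-comparison condition `(idx0)` at `r`, with
`φ = (φ₁,…,φ_n) ∈ P \ {0}` built from nonnegative nontrivial eigenfunctions
`φ_i = μ_i L_i φ_i`, one has `u ≠ T u + σ φ` for every `u ∈ P` with `‖u‖ = r`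
and every `σ > 0`. -/
theorem stmt_3
    (n : ℕ) (hn : 0 < n) (m p : Fin n → ℕ)
    (hm : ∀ i, 1 ≤ m i) (hp : ∀ i, 1 ≤ p i)
    -- `dk i l t s` denotes `∂ˡk_i/∂tˡ(t,s)`; in particular `dk i 0` is the kernel `k_i`
    (dk : (i : Fin n) → ℕ → ℝ → ℝ → ℝ)
    -- (C₁): `k_i ≥ 0`, measurable, continuous in `t` for a.e. `s`, dominated by `Φ_{i0} ∈ L¹`
    -- (C₂)-(C₃): similarly for the derivatives, the `m_i`-th one off the diagonal only
    (hk_nonneg : ∀ i, ∀ t ∈ Set.Icc (0:ℝ) 1, ∀ s ∈ Set.Icc (0:ℝ) 1, 0 ≤ dk i 0 t s)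
    (hk_meas : ∀ i, ∀ l ≤ m i, Measurable (Function.uncurry (dk i l)))
    (hk_cont : ∀ i, ∀ l < m i, ∀ᵐ s ∂(volume.restrict (Set.Icc (0:ℝ) 1)),
      ContinuousOn (fun t => dk i l t s) (Set.Icc (0:ℝ) 1))
    (hk_cont_top : ∀ i, ∀ᵐ s ∂(volume.restrict (Set.Icc (0:ℝ) 1)),
      ContinuousOn (fun t => dk i (m i) t s) (Set.Icc (0:ℝ) 1 \ {s}))
    (Φ : (i : Fin n) → ℕ → ℝ → ℝ)
    (hΦ_int : ∀ i, ∀ l ≤ m i, IntegrableOn (Φ i l) (Set.Icc (0:ℝ) 1))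
    (hΦ_dom : ∀ i, ∀ l ≤ m i, ∀ t ∈ Set.Icc (0:ℝ) 1,
      ∀ᵐ s ∂(volume.restrict (Set.Icc (0:ℝ) 1)), |dk i l t s| ≤ Φ i l s)
    (hk_deriv : ∀ i, ∀ l, l + 1 < m i → ∀ s ∈ Set.Icc (0:ℝ) 1, ∀ t ∈ Set.Icc (0:ℝ) 1,
      HasDerivWithinAt (fun τ => dk i l τ s) (dk i (l + 1) t s) (Set.Icc (0:ℝ) 1) t)
    (hk_deriv_top : ∀ i, ∀ s ∈ Set.Icc (0:ℝ) 1, ∀ t ∈ Set.Icc (0:ℝ) 1, t ≠ s →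
      HasDerivWithinAt (fun τ => dk i (m i - 1) τ s) (dk i (m i) t s) (Set.Icc (0:ℝ) 1) t)
    -- (C₄): the nonlinearities `f_i` are continuous and nonnegative
    (f : (i : Fin n) → ℝ → ((j : Fin n) → Fin (m j + 1) → ℝ) → ℝ)
    (hf_cont : ∀ i, ContinuousOn
      (fun q : ℝ × ((j : Fin n) → Fin (m j + 1) → ℝ) => f i q.1 q.2)
      (Set.Icc (0:ℝ) 1 ×ˢ {x : (j : Fin n) → Fin (m j + 1) → ℝ | ∀ j, 0 ≤ x j 0}))
    (hf_nonneg : ∀ i, ∀ t ∈ Set.Icc (0:ℝ) 1,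
      ∀ x : (j : Fin n) → Fin (m j + 1) → ℝ, (∀ j, 0 ≤ x j 0) → 0 ≤ f i t x)
    -- (C₅): `γ_{ij} ∈ C^{m_i}[0,1]` nonnegative; (C₆): nonnegative parameters
    (γ : (i : Fin n) → Fin (p i) → ℝ → ℝ)
    (hγ_smooth : ∀ i j, ContDiffOn ℝ (m i) (γ i j) (Set.Icc 0 1))
    (hγ_nonneg : ∀ i j, ∀ t ∈ Set.Icc (0:ℝ) 1, 0 ≤ γ i j t)
    (lam : Fin n → ℝ) (η : (i : Fin n) → Fin (p i) → ℝ)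
    (hlam : ∀ i, 0 ≤ lam i) (hη : ∀ i j, 0 ≤ η i j)
    -- (C₈): the functionals `h_{ij} : P → [0,∞)` are continuous and map bounded
    -- sets into bounded sets
    (h : (i : Fin n) → Fin (p i) → (Fin n → ℝ → ℝ) → ℝ)
    (hh_nonneg : ∀ i j, ∀ u, memP m u → 0 ≤ h i j u)
    (hh_cont : ∀ i j, ∀ u, memP m u → ∀ ε > (0:ℝ), ∃ δ' > (0:ℝ), ∀ v, memP m v →
      normP m (fun i' t => u i' t - v i' t) < δ' → |h i j u - h i j v| < ε)
    (hh_bdd : ∀ i j, ∀ B : ℝ, ∃ C : ℝ, ∀ u, memP m u → normP m u ≤ B → h i j u ≤ C)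
    -- (C₇): the Hammerstein operator `L_i w(t) = ∫₀¹ k_i(t,s)w(s)ds` on `C[0,1]`
    -- has spectral radius `r(L_i) = rL i > 0`; its characteristic value is `μ_i = (rL i)⁻¹`
    (L : (i : Fin n) → C(Set.Icc (0:ℝ) 1, ℝ) →L[ℝ] C(Set.Icc (0:ℝ) 1, ℝ))
    (hL : ∀ i (w : C(Set.Icc (0:ℝ) 1, ℝ)) (t : Set.Icc (0:ℝ) 1),
      L i w t = ∫ s in (0:ℝ)..1, dk i 0 ↑t s * w (Set.projIcc 0 1 zero_le_one s))
    (rL : Fin n → ℝ) (hrL_pos : ∀ i, 0 < rL i)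
    (hrL : ∀ i, spectralRadius ℝ (L i) = ENNReal.ofReal (rL i))
    (r δ : ℝ) (hr : 0 < r) (hδ : 0 < δ) (i₀ : Fin n)
    (hidx0a : (rL i₀)⁻¹ / δ ≤ lam i₀)
    (hidx0b : ∀ t ∈ Set.Icc (0:ℝ) 1, ∀ x ∈ Jset m r, δ * x i₀ 0 ≤ f i₀ t x)
    (φ : Fin n → ℝ → ℝ)
    (hφ_cont : ∀ i, ContinuousOn (φ i) (Set.Icc 0 1))
    (hφ_nonneg : ∀ i, ∀ t ∈ Set.Icc (0:ℝ) 1, 0 ≤ φ i t)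
    (hφ_ne : ∀ i, ∃ t ∈ Set.Icc (0:ℝ) 1, φ i t ≠ 0)
    (hφ_eig : ∀ i, ∀ t ∈ Set.Icc (0:ℝ) 1,
      φ i t = (rL i)⁻¹ * ∫ s in (0:ℝ)..1, dk i 0 t s * φ i s)
    (hφ_memP : memP m φ) :
    ∀ u : Fin n → ℝ → ℝ, memP m u → normP m u = r → ∀ σ : ℝ, 0 < σ →
      ¬ (∀ i, ∀ t ∈ Set.Icc (0:ℝ) 1,
        u i t = (lam i * (∫ s in (0:ℝ)..1, dk i 0 t s * f i s (jet m u s)) + ∑ j, η i j * γ i j t * h i j u) + σ * φ i t) :=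
  stmt_3_general n m p dk hk_nonneg hk_meas Φ hΦ_int hΦ_dom f hf_cont γ hγ_nonneg lam η hlam hη h
    hh_nonneg rL hrL_pos r δ hδ i₀ hidx0a hidx0b φ hφ_cont hφ_nonneg hφ_ne hφ_eig
end

section
/- Let k₂(t,s) := (1/6)·s(1−t)(2t−s²−t²) for s ≤ t and k₂(t,s) := (1/6)·t(1−s)(2s−t²−s²) for s > t, and let L₂ be the compact linear operator on C[0,1] defined by L₂ w(t) := ∫₀¹ k₂(t,s) w(s) ds. Then the spectral radius of L₂ equals 1/π⁴, i.e. the characteristic value μ₂ := 1/r(L₂) equals π⁴. -/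
/-!
The function `sin (π t)` is an eigenfunction of `L₂` with eigenvalue `1/π⁴`: on either side of
`t` the kernel `k₂(t, ·)` is a cubic, and integrating a cubic against `sin (π s)` is elementary.
So `1/π⁴` lies in the spectrum.

Conversely `0 ≤ k₂(t,s) ≤ sin (π t) / 24`, hence `|L₂ w| ≤ ‖w‖ sin (π ·) / 24`, and positivity of
the kernel turns a bound `|w| ≤ B sin (π ·)` into `|L₂ w| ≤ B sin (π ·) / π⁴`. Iterating,
`‖L₂ ^ (n+1)‖ ≤ π^(-4n) / 24`, and since `|μ|^(n+1) ≤ ‖L₂ ^ (n+1)‖` for every spectral value `μ`,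
no spectral value exceeds `1/π⁴` in modulus.
-/

open Set MeasureTheory

/-- The Green's function of `u'''' = g` on `(0,1)` with
`u(0) = u(1) = u''(0) = u''(1) = 0` (simply supported beam). -/
noncomputable def k2 (t s : ℝ) : ℝ :=
  if s ≤ t then (1 / 6) * (s * (1 - t) * (2 * t - s ^ 2 - t ^ 2))
  else (1 / 6) * (t * (1 - s) * (2 * s - t ^ 2 - s ^ 2))

open Real Filter Topology

theorem le_of_forall_pow_succ_le_mul_pow {x q C : ℝ} (hq : 0 ≤ q)
    (h : ∀ n : ℕ, x ^ (n + 1) ≤ C * q ^ n) : x ≤ q := by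
  by_contra! hqx
  have hx : 0 < x := hq.trans_lt hqx
  have hbound : ∀ n : ℕ, x ≤ C * (q / x) ^ n := fun n => by
    rw [div_pow, ← mul_div_assoc, le_div_iff₀ (pow_pos hx n), ← pow_succ']
    exact h n
  have hlim : Tendsto (fun n : ℕ => C * (q / x) ^ n) atTop (𝓝 0) := by
    simpa using (tendsto_pow_atTop_nhds_zero_of_lt_one (div_nonneg hq hx.le)
      ((div_lt_one hx).2 hqx)).const_mul C
  exact hx.not_ge (ge_of_tendsto' hlim hbound)

theorem spectralRadius_le_of_norm_pow_succ_le {𝕜 A : Type*} [NormedField 𝕜] [NormedRing A]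
    [NormedAlgebra 𝕜 A] [CompleteSpace A] [NormOneClass A] {a : A} {q C : ℝ} (hq : 0 ≤ q)
    (h : ∀ n : ℕ, ‖a ^ (n + 1)‖ ≤ C * q ^ n) : spectralRadius 𝕜 a ≤ ENNReal.ofReal q := by
  refine iSup₂_le fun k hk => ?_
  rw [← ENNReal.ofReal_coe_nnreal, coe_nnnorm]
  refine ENNReal.ofReal_le_ofReal (le_of_forall_pow_succ_le_mul_pow (C := C) hq fun n => ?_)
  rw [← norm_pow]
  exact (spectrum.norm_le_norm_of_mem (spectrum.pow_mem_pow a (n + 1) hk)).trans (h n)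

theorem ContinuousLinearMap.mem_spectrum_of_apply_eq_smul {𝕜 E : Type*} [NormedField 𝕜]
    [NormedAddCommGroup E] [NormedSpace 𝕜 E] {T : E →L[𝕜] E} {μ : 𝕜} {v : E} (hv : v ≠ 0)
    (hTv : T v = μ • v) : μ ∈ spectrum 𝕜 T := by
  rintro ⟨u, hu⟩
  have hker : (u : E →L[𝕜] E) v = 0 := by simp [hu, Algebra.algebraMap_eq_smul_one, hTv]
  have hinv : (↑u⁻¹ * ↑u : E →L[𝕜] E) v = v := by rw [u.inv_mul]; rfl
  exact hv <| by rwa [mul_apply_eq_comp, hker, map_zero, eq_comm] at hinv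

theorem ContinuousMap.norm_pow_succ_le_of_abs_le_mul {X : Type*} [TopologicalSpace X]
    [CompactSpace X] {T : C(X, ℝ) →L[ℝ] C(X, ℝ)} {φ : C(X, ℝ)} {C q : ℝ} (hC : 0 ≤ C)
    (hq : 0 ≤ q) (hT : ∀ w x, |T w x| ≤ C * ‖w‖ * φ x)
    (hTφ : ∀ w B, (∀ x, |w x| ≤ B * φ x) → ∀ x, |T w x| ≤ q * B * φ x) (n : ℕ) :
    ‖T ^ (n + 1)‖ ≤ C * ‖φ‖ * q ^ n := by
  have hpow : ∀ n : ℕ, ∀ w x, |(T ^ (n + 1)) w x| ≤ q ^ n * C * ‖w‖ * φ x := by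
    intro n
    induction n with
    | zero => simpa using hT
    | succ n ih =>
      intro w x
      rw [pow_succ', mul_apply_eq_comp]
      calc |T ((T ^ (n + 1)) w) x| ≤ q * (q ^ n * C * ‖w‖) * φ x := hTφ _ _ (ih w) x
        _ = q ^ (n + 1) * C * ‖w‖ * φ x := by ring
  refine ContinuousLinearMap.opNorm_le_bound _ (by positivity) fun w => ?_
  refine (ContinuousMap.norm_le _ (by positivity)).2 fun x => ?_
  calc ‖(T ^ (n + 1)) w x‖ ≤ q ^ n * C * ‖w‖ * φ x := hpow n w x
    _ ≤ q ^ n * C * ‖w‖ * ‖φ‖ := by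
      gcongr
      exact (le_abs_self _).trans (φ.norm_coe_le_norm x)
    _ = C * ‖φ‖ * q ^ n * ‖w‖ := by ring

theorem two_mul_mul_one_sub_le_sin_pi_mul {x : ℝ} (hx₀ : 0 ≤ x) (hx₁ : x ≤ 1) :
    2 * x * (1 - x) ≤ sin (π * x) := by
  wlog hx : x ≤ 1 / 2 generalizing x
  · have h := this (x := 1 - x) (by linarith) (by linarith) (by linarith)
    rw [mul_one_sub π, sin_pi_sub] at h
    linarith
  calc 2 * x * (1 - x) ≤ 2 / π * (π * x) := by
        field_simp; nlinarith
    _ ≤ sin (π * x) := mul_le_sin (by positivity) (by nlinarith [pi_pos])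

theorem continuous_k2 (t : ℝ) : Continuous (k2 t) := by
  refine Continuous.if_le (by fun_prop) (by fun_prop) continuous_id continuous_const ?_
  rintro s rfl
  ring

theorem k2_nonneg {t s : ℝ} (ht : t ∈ Icc (0 : ℝ) 1) (hs : s ∈ Icc (0 : ℝ) 1) : 0 ≤ k2 t s := by
  obtain ⟨ht₀, ht₁⟩ := ht
  obtain ⟨hs₀, hs₁⟩ := hs
  unfold k2
  split_ifs with h
  · nlinarith [mul_nonneg (mul_nonneg ht₀ hs₀) (sq_nonneg (1 - t)),
      mul_nonneg (mul_nonneg (mul_nonneg hs₀ (sub_nonneg.2 ht₁)) (sub_nonneg.2 h))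
        (add_nonneg ht₀ hs₀)]
  · nlinarith [mul_nonneg (mul_nonneg hs₀ ht₀) (sq_nonneg (1 - s)),
      mul_nonneg (mul_nonneg (mul_nonneg ht₀ (sub_nonneg.2 hs₁)) (by linarith : 0 ≤ s - t))
        (add_nonneg hs₀ ht₀)]

theorem k2_le {t s : ℝ} (ht : t ∈ Icc (0 : ℝ) 1) (hs : s ∈ Icc (0 : ℝ) 1) :
    k2 t s ≤ t * (1 - t) / 12 := by
  obtain ⟨ht₀, ht₁⟩ := ht
  obtain ⟨hs₀, hs₁⟩ := hs
  have hst : k2 t s ≤ t * (1 - t) * (s * (1 - s)) / 3 := by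
    unfold k2
    split_ifs with h
    · nlinarith [mul_nonneg (mul_nonneg hs₀ (sub_nonneg.2 ht₁)) (sq_nonneg (t - s))]
    · nlinarith [mul_nonneg (mul_nonneg ht₀ (sub_nonneg.2 hs₁)) (sq_nonneg (s - t))]
  nlinarith [mul_nonneg ht₀ (sub_nonneg.2 ht₁), sq_nonneg (s - 1 / 2)]

theorem k2_le_sin {t s : ℝ} (ht : t ∈ Icc (0 : ℝ) 1) (hs : s ∈ Icc (0 : ℝ) 1) :
    k2 t s ≤ sin (π * t) / 24 := by
  linarith [k2_le ht hs, two_mul_mul_one_sub_le_sin_pi_mul ht.1 ht.2]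

/-- An antiderivative of `(p₀ + p₁ s + p₂ s² + p₃ s³) sin (π s)`, found by integrating by parts
three times. -/
noncomputable def cubicMulSinAntideriv (p₀ p₁ p₂ p₃ s : ℝ) : ℝ :=
  (-(p₀ + p₁ * s + p₂ * s ^ 2 + p₃ * s ^ 3) / π + (2 * p₂ + 6 * p₃ * s) / π ^ 3) * cos (π * s)
    + ((p₁ + 2 * p₂ * s + 3 * p₃ * s ^ 2) / π ^ 2 - 6 * p₃ / π ^ 4) * sin (π * s)

theorem hasDerivAt_cubicMulSinAntideriv (p₀ p₁ p₂ p₃ x : ℝ) :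
    HasDerivAt (cubicMulSinAntideriv p₀ p₁ p₂ p₃)
      ((p₀ + p₁ * x + p₂ * x ^ 2 + p₃ * x ^ 3) * sin (π * x)) x := by
  have hlin : HasDerivAt (fun s : ℝ => π * s) π x := by
    simpa using (hasDerivAt_id x).const_mul π
  have hp : HasDerivAt (fun s : ℝ => p₀ + p₁ * s + p₂ * s ^ 2 + p₃ * s ^ 3)
      (p₁ + 2 * p₂ * x + 3 * p₃ * x ^ 2) x :=
    ((((hasDerivAt_id x).const_mul p₁).const_add p₀).add ((hasDerivAt_pow 2 x).const_mul p₂)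
      |>.add ((hasDerivAt_pow 3 x).const_mul p₃)).congr_deriv (by norm_num; ring)
  have hp' : HasDerivAt (fun s : ℝ => p₁ + 2 * p₂ * s + 3 * p₃ * s ^ 2) (2 * p₂ + 6 * p₃ * x) x :=
    ((((hasDerivAt_id x).const_mul (2 * p₂)).const_add p₁).add
      ((hasDerivAt_pow 2 x).const_mul (3 * p₃))).congr_deriv (by norm_num; ring)
  have hp'' : HasDerivAt (fun s : ℝ => 2 * p₂ + 6 * p₃ * s) (6 * p₃) x := by
    simpa using ((hasDerivAt_id x).const_mul (6 * p₃)).const_add (2 * p₂)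
  refine (((hp.neg.div_const π).add (hp''.div_const (π ^ 3))).mul hlin.cos |>.add
    (((hp'.div_const (π ^ 2)).sub_const (6 * p₃ / π ^ 4)).mul hlin.sin)).congr_deriv ?_
  simp only [Pi.add_apply, Pi.neg_apply]
  field_simp
  ring

theorem integral_cubic_mul_sin_pi_mul (p₀ p₁ p₂ p₃ a b : ℝ) :
    ∫ s in a..b, (p₀ + p₁ * s + p₂ * s ^ 2 + p₃ * s ^ 3) * sin (π * s)
      = cubicMulSinAntideriv p₀ p₁ p₂ p₃ b - cubicMulSinAntideriv p₀ p₁ p₂ p₃ a :=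
  intervalIntegral.integral_eq_sub_of_hasDerivAt
    (fun x _ => hasDerivAt_cubicMulSinAntideriv p₀ p₁ p₂ p₃ x)
    ((by fun_prop : Continuous _).intervalIntegrable _ _)

theorem integral_k2_mul_sin_pi_mul {t : ℝ} (ht : t ∈ Icc (0 : ℝ) 1) :
    ∫ s in (0 : ℝ)..1, k2 t s * sin (π * s) = sin (π * t) / π ^ 4 := by
  obtain ⟨ht₀, ht₁⟩ := ht
  have hint : Continuous fun s => k2 t s * sin (π * s) := (continuous_k2 t).mul (by fun_prop)
  have hleft : ∫ s in (0 : ℝ)..t, k2 t s * sin (π * s) = ∫ s in (0 : ℝ)..t,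
      (0 + (1 - t) * (2 * t - t ^ 2) / 6 * s + 0 * s ^ 2 + -((1 - t) / 6) * s ^ 3)
        * sin (π * s) := by
    refine intervalIntegral.integral_congr fun s hs => ?_
    rw [uIcc_of_le ht₀] at hs
    simp only [k2, if_pos hs.2]
    ring
  have hright : ∫ s in t..(1 : ℝ), k2 t s * sin (π * s) = ∫ s in t..(1 : ℝ),
      (-(t ^ 3 / 6) + t * (2 + t ^ 2) / 6 * s + -(t / 2) * s ^ 2 + t / 6 * s ^ 3)
        * sin (π * s) := by
    refine intervalIntegral.integral_congr fun s hs => ?_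
    rw [uIcc_of_le ht₁] at hs
    rcases hs.1.eq_or_lt with rfl | hts
    · simp only [k2, if_pos le_rfl]
      ring
    · simp only [k2, if_neg hts.not_ge]
      ring
  rw [← intervalIntegral.integral_add_adjacent_intervals (b := t) (hint.intervalIntegrable _ _)
    (hint.intervalIntegrable _ _), hleft, hright, integral_cubic_mul_sin_pi_mul,
    integral_cubic_mul_sin_pi_mul]
  simp only [cubicMulSinAntideriv, mul_zero, mul_one, cos_zero, sin_zero, cos_pi, sin_pi]
  field_simp
  ring

noncomputable def sinPiMul : C(Icc (0 : ℝ) 1, ℝ) := ⟨fun t => sin (π * t), by fun_prop⟩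

theorem sinPiMul_apply (t : Icc (0 : ℝ) 1) : sinPiMul t = sin (π * t) := rfl

theorem sinPiMul_ne_zero : sinPiMul ≠ 0 := by
  intro h
  have := congr($h ⟨1 / 2, by norm_num, by norm_num⟩)
  rw [sinPiMul_apply, mul_one_div, sin_pi_div_two] at this
  exact one_ne_zero this

def IsIntegralOperator (k : ℝ → ℝ → ℝ) (L : C(Icc (0 : ℝ) 1, ℝ) →L[ℝ] C(Icc (0 : ℝ) 1, ℝ)) :
    Prop :=
  ∀ w t, L w t = ∫ s in (0 : ℝ)..1, k t s * w (projIcc 0 1 zero_le_one s)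

namespace IsIntegralOperator

variable {L : C(Icc (0 : ℝ) 1, ℝ) →L[ℝ] C(Icc (0 : ℝ) 1, ℝ)}

theorem abs_apply_le_integral {k : ℝ → ℝ → ℝ} (hL : IsIntegralOperator k L)
    (hk : ∀ t, Continuous (k t)) (hk₀ : ∀ {t s}, t ∈ Icc (0 : ℝ) 1 → s ∈ Icc (0 : ℝ) 1 → 0 ≤ k t s)
    {w : C(Icc (0 : ℝ) 1, ℝ)} {g : ℝ → ℝ} (hg : Continuous g) (hwg : ∀ s, |w s| ≤ g s)
    (t : Icc (0 : ℝ) 1) : |L w t| ≤ ∫ s in (0 : ℝ)..1, k t s * g s := by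
  have hint : Continuous fun s => k t s * w (projIcc 0 1 zero_le_one s) :=
    (hk t).mul (w.continuous.comp continuous_projIcc)
  rw [hL]
  refine (intervalIntegral.abs_integral_le_integral_abs zero_le_one).trans <|
    intervalIntegral.integral_mono_on zero_le_one (hint.abs.intervalIntegrable _ _)
      (((hk t).mul hg).intervalIntegrable _ _) fun s hs => ?_
  rw [abs_mul, abs_of_nonneg (hk₀ t.2 hs)]
  refine mul_le_mul_of_nonneg_left ?_ (hk₀ t.2 hs)
  simpa [projIcc_of_mem zero_le_one hs] using hwg ⟨s, hs⟩

theorem apply_sinPiMul (hL : IsIntegralOperator k2 L) : L sinPiMul = (1 / π ^ 4) • sinPiMul := by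
  ext t
  have hcongr : ∫ s in (0 : ℝ)..1, k2 t s * sinPiMul (projIcc 0 1 zero_le_one s)
      = ∫ s in (0 : ℝ)..1, k2 t s * sin (π * s) :=
    intervalIntegral.integral_congr fun s hs => by
      rw [uIcc_of_le zero_le_one] at hs
      simp [sinPiMul_apply, projIcc_of_mem zero_le_one hs]
  rw [hL, hcongr, integral_k2_mul_sin_pi_mul t.2, ContinuousMap.smul_apply, sinPiMul_apply,
    smul_eq_mul, one_div_mul_eq_div]

theorem abs_apply_le_norm_mul_sinPiMul (hL : IsIntegralOperator k2 L) (w : C(Icc (0 : ℝ) 1, ℝ))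
    (t : Icc (0 : ℝ) 1) : |L w t| ≤ 1 / 24 * ‖w‖ * sinPiMul t := by
  refine (hL.abs_apply_le_integral continuous_k2 k2_nonneg continuous_const
    (fun s => (Real.norm_eq_abs _).symm.trans_le (w.norm_coe_le_norm s)) t).trans ?_
  calc ∫ s in (0 : ℝ)..1, k2 t s * ‖w‖
      ≤ ∫ s in (0 : ℝ)..1, sin (π * t) / 24 * ‖w‖ :=
        intervalIntegral.integral_mono_on zero_le_one
          (((continuous_k2 t).mul continuous_const).intervalIntegrable _ _) intervalIntegrable_const
          fun s hs => mul_le_mul_of_nonneg_right (k2_le_sin t.2 hs) (norm_nonneg w)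
    _ = 1 / 24 * ‖w‖ * sinPiMul t := by
      rw [intervalIntegral.integral_const, sub_zero, one_smul, sinPiMul_apply]
      ring

theorem abs_apply_le_of_abs_le_mul_sinPiMul (hL : IsIntegralOperator k2 L)
    {w : C(Icc (0 : ℝ) 1, ℝ)} {B : ℝ} (hw : ∀ s, |w s| ≤ B * sinPiMul s) (t : Icc (0 : ℝ) 1) :
    |L w t| ≤ 1 / π ^ 4 * B * sinPiMul t := by
  refine (hL.abs_apply_le_integral continuous_k2 k2_nonneg (g := fun s => B * sin (π * s))
    (by fun_prop) hw t).trans_eq ?_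
  simp_rw [mul_left_comm _ B]
  rw [intervalIntegral.integral_const_mul, integral_k2_mul_sin_pi_mul t.2, sinPiMul_apply]
  ring

end IsIntegralOperator

/-- the linear Hammerstein operator `L₂ w (t) = ∫₀¹ k₂(t,s) w(s) ds`
on `C[0,1]` has spectral radius `1/π⁴`, i.e. the characteristic value
`μ₂ = 1/r(L₂)` equals `π⁴`. -/
theorem stmt_10 (L₂ : C(Set.Icc (0:ℝ) 1, ℝ) →L[ℝ] C(Set.Icc (0:ℝ) 1, ℝ))
    (hL₂ : ∀ (w : C(Set.Icc (0:ℝ) 1, ℝ)) (t : Set.Icc (0:ℝ) 1),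
      L₂ w t = ∫ s in (0:ℝ)..1, k2 ↑t s * w (Set.projIcc 0 1 zero_le_one s)) :
    spectralRadius ℝ L₂ = ENNReal.ofReal (1 / Real.pi ^ 4) := by
  have hL : IsIntegralOperator k2 L₂ := hL₂
  have hq : 0 ≤ 1 / π ^ 4 := by positivity
  have hpow (n : ℕ) : ‖L₂ ^ (n + 1)‖ ≤ 1 / 24 * ‖sinPiMul‖ * (1 / π ^ 4) ^ n :=
    ContinuousMap.norm_pow_succ_le_of_abs_le_mul (by norm_num) hq
      hL.abs_apply_le_norm_mul_sinPiMul (fun _ _ => hL.abs_apply_le_of_abs_le_mul_sinPiMul) n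
  have hmem : 1 / π ^ 4 ∈ spectrum ℝ L₂ :=
    ContinuousLinearMap.mem_spectrum_of_apply_eq_smul sinPiMul_ne_zero hL.apply_sinPiMul
  have hup := spectralRadius_le_of_norm_pow_succ_le (𝕜 := ℝ) (a := L₂) hq hpow
  have hlow : ENNReal.ofReal (1 / π ^ 4) ≤ spectralRadius ℝ L₂ := by
    rw [← Real.enorm_eq_ofReal hq]
    exact le_iSup₂ (f := fun k (_ : k ∈ spectrum ℝ L₂) => ‖k‖ₑ) _ hmem
  exact le_antisymm hup hlow
end
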